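/- arXiv:1206.5930 — 3 statements merged into one kernel-verified Lean document; each statement's English description precedes it below -/
import Mathlib

section
/- A triangle-free combinatorial (r,k)-configuration with k > 2 has unique neighborhoods: if two points p and q satisfy N(p) = N(q), then p = q. -/
open Finset

variable {P : Type*}

/-- Two points are collinear if they are equal or some line contains both. -/
def Collin [DecidableEq P] (L : Finset (Finset P)) (p q : P) : Prop :=
  p = q ∨ ∃ l ∈ L, p ∈ l ∧ q ∈ l

/-- The (open) neighborhood `N p` of a point `p`: the points collinear with `p`
and different from `p`. -/
def nbhd [Fintype P] [DecidableEq P] (L : Finset (Finset P)) (p : P) : Finset P :=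
  Finset.univ.filter fun q => q ≠ p ∧ ∃ l ∈ L, p ∈ l ∧ q ∈ l

/-- The closed neighborhood `CN p` of a point `p`: its neighborhood together with `p`. -/
def cnbhd [Fintype P] [DecidableEq P] (L : Finset (Finset P)) (p : P) : Finset P :=
  insert p (nbhd L p)

/-- A combinatorial `(v,b,r,k)`-configuration: `v` points, `b` lines, every line
has exactly `k ≥ 2` points, every point is on exactly `r ≥ 1` lines, and any two
distinct points are on at most one common line. -/
def IsConfiguration [Fintype P] [DecidableEq P] (L : Finset (Finset P))
    (v b r k : ℕ) : Prop :=
  Fintype.card P = v ∧ L.card = b ∧ 2 ≤ k ∧ 1 ≤ r ∧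
  (∀ l ∈ L, l.card = k) ∧
  (∀ p : P, (L.filter fun l => p ∈ l).card = r) ∧
  (∀ p q : P, p ≠ q → (L.filter fun l => p ∈ l ∧ q ∈ l).card ≤ 1)

/-- A triangle: three distinct points that are pairwise collinear via three
distinct lines. -/
def HasTriangle [DecidableEq P] (L : Finset (Finset P)) : Prop :=
  ∃ p q s : P, ∃ l₁ l₂ l₃ : Finset P, l₁ ∈ L ∧ l₂ ∈ L ∧ l₃ ∈ L ∧
    p ≠ q ∧ q ≠ s ∧ p ≠ s ∧ l₁ ≠ l₂ ∧ l₂ ≠ l₃ ∧ l₁ ≠ l₃ ∧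
    p ∈ l₁ ∧ q ∈ l₁ ∧ q ∈ l₂ ∧ s ∈ l₂ ∧ p ∈ l₃ ∧ s ∈ l₃


/-! If `p ≠ q` had the same neighbourhood, `q` would lie on no line through `p`. Since `k > 2`,
a line through `p` carries two further points `x, y`; both are neighbours of `p`, hence of `q`,
and `x, y, q` form a triangle. -/

def IsPartialLinearSpace (L : Finset (Finset P)) : Prop :=
  ∀ ⦃a c : P⦄ ⦃l₁ l₂ : Finset P⦄, a ≠ c → l₁ ∈ L → l₂ ∈ L →
    a ∈ l₁ → c ∈ l₁ → a ∈ l₂ → c ∈ l₂ → l₁ = l₂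

@[simp]
theorem mem_nbhd [Fintype P] [DecidableEq P] {L : Finset (Finset P)} {p q : P} :
    q ∈ nbhd L p ↔ q ≠ p ∧ ∃ l ∈ L, p ∈ l ∧ q ∈ l := by
  simp [nbhd]

theorem notMem_of_nbhd_eq [Fintype P] [DecidableEq P] {L : Finset (Finset P)} {p q : P}
    (h : nbhd L p = nbhd L q) (hpq : p ≠ q) {l : Finset P} (hl : l ∈ L) (hpl : p ∈ l) :
    q ∉ l := by
  intro hql
  have hq : q ∈ nbhd L q := h ▸ mem_nbhd.mpr ⟨hpq.symm, l, hl, hpl, hql⟩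
  exact (mem_nbhd.mp hq).1 rfl

theorem Finset.exists_ne_ne_of_two_lt_card [DecidableEq P] {s : Finset P} {p : P}
    (hp : p ∈ s) (hs : 2 < s.card) : ∃ x ∈ s, ∃ y ∈ s, x ≠ p ∧ y ≠ p ∧ x ≠ y := by
  obtain ⟨x, hx, y, hy, hxy⟩ := one_lt_card.mp (by rw [card_erase_of_mem hp]; omega)
  obtain ⟨hxp, hxs⟩ := mem_erase.mp hx
  obtain ⟨hyp, hys⟩ := mem_erase.mp hy
  exact ⟨x, hxs, y, hys, hxp, hyp, hxy⟩

namespace IsConfiguration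

variable [Fintype P] [DecidableEq P] {L : Finset (Finset P)} {v b r k : ℕ}

theorem isPartialLinearSpace (hC : IsConfiguration L v b r k) : IsPartialLinearSpace L :=
  fun a c l₁ l₂ hac h₁ h₂ ha₁ hc₁ ha₂ hc₂ =>
    card_le_one.mp (hC.2.2.2.2.2.2 a c hac) l₁ (mem_filter.mpr ⟨h₁, ha₁, hc₁⟩)
      l₂ (mem_filter.mpr ⟨h₂, ha₂, hc₂⟩)

theorem exists_mem_line (hC : IsConfiguration L v b r k) (p : P) : ∃ l ∈ L, p ∈ l := by
  obtain ⟨l, hl⟩ : (L.filter fun l => p ∈ l).Nonempty := by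
    rw [← card_pos, hC.2.2.2.2.2.1 p]
    exact hC.2.2.2.1
  exact ⟨l, (mem_filter.mp hl).1, (mem_filter.mp hl).2⟩

theorem card_line (hC : IsConfiguration L v b r k) {l : Finset P} (hl : l ∈ L) :
    l.card = k :=
  hC.2.2.2.2.1 l hl

end IsConfiguration

/-- The lines `qx` and `qy` differ, since otherwise both would be `l`. -/
theorem IsPartialLinearSpace.hasTriangle [Fintype P] [DecidableEq P]
    {L : Finset (Finset P)} (hL : IsPartialLinearSpace L) {l : Finset P} (hl : l ∈ L)
    {x y q : P} (hx : x ∈ l) (hy : y ∈ l) (hxy : x ≠ y) (hq : q ∉ l)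
    (hxq : x ∈ nbhd L q) (hyq : y ∈ nbhd L q) : HasTriangle L := by
  obtain ⟨hxq, m₁, hm₁, hqm₁, hxm₁⟩ := mem_nbhd.mp hxq
  obtain ⟨hyq, m₂, hm₂, hqm₂, hym₂⟩ := mem_nbhd.mp hyq
  have hlm₁ : l ≠ m₁ := by rintro rfl; exact hq hqm₁
  have hlm₂ : l ≠ m₂ := by rintro rfl; exact hq hqm₂
  have hm₂₁ : m₂ ≠ m₁ := by
    rintro rfl
    exact hlm₂ (hL hxy hl hm₂ hx hy hxm₁ hym₂)
  exact ⟨x, y, q, l, m₂, m₁, hl, hm₂, hm₁, hxy, hyq, hxq, hlm₂, hm₂₁, hlm₁,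
    hx, hy, hym₂, hqm₂, hxm₁, hqm₁⟩

/-- A triangle-free combinatorial `(r,k)`-configuration with `k > 2` has unique
neighborhoods: if `N p = N q` then `p = q`. -/
theorem triangle_free_unique_neighborhoods {P : Type*} [Fintype P]
    [DecidableEq P] (L : Finset (Finset P)) (v b r k : ℕ)
    (hC : IsConfiguration L v b r k) (hk : 2 < k) (htf : ¬HasTriangle L)
    (p q : P) (h : nbhd L p = nbhd L q) :
    p = q := by
  by_contra hpq
  obtain ⟨l, hl, hpl⟩ := hC.exists_mem_line p
  obtain ⟨x, hx, y, hy, hxp, hyp, hxy⟩ :=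
    exists_ne_ne_of_two_lt_card hpl (hC.card_line hl ▸ hk)
  have hxq : x ∈ nbhd L q := h ▸ mem_nbhd.mpr ⟨hxp, l, hl, hpl, hx⟩
  have hyq : y ∈ nbhd L q := h ▸ mem_nbhd.mpr ⟨hyp, l, hl, hpl, hy⟩
  exact htf (hC.isPartialLinearSpace.hasTriangle hl hx hy hxy
    (notMem_of_nbhd_eq h hpq hl hpl) hxq hyq)
end

section
/- A combinatorial (v,b,r,k)-configuration with deficiency one has unique closed neighborhoods: every point p has a unique anti-podal point (a unique point not collinear with p), anti-podality is an involution without fixed points, and CN(p) = CN(q) implies p = q. -/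
open Finset

variable {P : Type*}

/-! Counting along the `r` lines through `p` gives `|CN(p)| = r(k-1) + 1 = v - 1`, so exactly
one point is not collinear with `p`. As collinearity is symmetric, sending `p` to that point is
an involution, and `CN(p)` determines `p` as the antipode of the unique point outside it. -/

theorem involutive_of_not_rel_iff_eq {α : Type*} {R : α → α → Prop} {f : α → α}
    (hR : ∀ p q, R p q → R q p) (hf : ∀ p q, ¬R p q ↔ q = f p) : Function.Involutive f :=
  fun p => ((hf (f p) p).1 fun h => (hf p (f p)).2 rfl (hR _ _ h)).symm

namespace Collin

variable [DecidableEq P] {L : Finset (Finset P)}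

theorem refl (p : P) : Collin L p p := Or.inl rfl

theorem symm {p q : P} : Collin L p q → Collin L q p
  | .inl h => .inl h.symm
  | .inr ⟨l, hl, hp, hq⟩ => .inr ⟨l, hl, hq, hp⟩

end Collin

section Neighborhoods

variable [Fintype P] [DecidableEq P] {L : Finset (Finset P)}

theorem mem_cnbhd_iff {p q : P} : q ∈ cnbhd L p ↔ Collin L p q := by
  by_cases hqp : q = p
  · subst hqp
    simpa [cnbhd] using Collin.refl q
  · simp [cnbhd, nbhd, Collin, hqp, Ne.symm hqp]

theorem collin_iff_of_cnbhd_eq {p q x : P} (h : cnbhd L p = cnbhd L q) :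
    Collin L p x ↔ Collin L q x := by
  rw [← mem_cnbhd_iff, h, mem_cnbhd_iff]

theorem nbhd_eq_biUnion (p : P) :
    nbhd L p = {l ∈ L | p ∈ l}.biUnion fun l => l.erase p := by
  ext q
  simp only [nbhd, mem_filter, mem_univ, true_and, mem_biUnion, mem_erase]
  grind

end Neighborhoods

namespace IsConfiguration

variable [Fintype P] [DecidableEq P] {L : Finset (Finset P)} {v b r k : ℕ}

theorem eq_of_mem_of_mem (hC : IsConfiguration L v b r k) {p q : P} (hpq : p ≠ q)
    {l₁ l₂ : Finset P} (hl₁ : l₁ ∈ L) (hl₂ : l₂ ∈ L) (hp₁ : p ∈ l₁) (hq₁ : q ∈ l₁)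
    (hp₂ : p ∈ l₂) (hq₂ : q ∈ l₂) : l₁ = l₂ :=
  card_le_one.1 (hC.2.2.2.2.2.2 p q hpq) l₁ (mem_filter.2 ⟨hl₁, hp₁, hq₁⟩)
    l₂ (mem_filter.2 ⟨hl₂, hp₂, hq₂⟩)

/-- The `r` lines through `p` each contribute `k - 1` neighbours, and no neighbour twice. -/
theorem card_nbhd (hC : IsConfiguration L v b r k) (p : P) :
    #(nbhd L p) = r * (k - 1) := by
  rw [nbhd_eq_biUnion, card_biUnion]
  · rw [sum_congr rfl fun l hl => ?_, sum_const, hC.2.2.2.2.2.1 p, smul_eq_mul]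
    rw [mem_filter] at hl
    rw [card_erase_of_mem hl.2, hC.2.2.2.2.1 l hl.1]
  · intro l₁ h₁ l₂ h₂ hne
    rw [mem_coe, mem_filter] at h₁ h₂
    refine disjoint_left.2 fun q hq₁ hq₂ => hne ?_
    rw [mem_erase] at hq₁ hq₂
    exact hC.eq_of_mem_of_mem (Ne.symm hq₁.1) h₁.1 h₂.1 h₁.2 hq₁.2 h₂.2 hq₂.2

theorem card_cnbhd (hC : IsConfiguration L v b r k) (p : P) :
    #(cnbhd L p) = r * (k - 1) + 1 := by
  rw [cnbhd, card_insert_of_notMem (by simp [nbhd]), hC.card_nbhd]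

theorem existsUnique_not_collin (hC : IsConfiguration L v b r k)
    (hdef : v = r * (k - 1) + 2) (p : P) : ∃! q, ¬Collin L p q := by
  classical
  have hcompl : ({q | ¬Collin L p q} : Finset P) = (cnbhd L p)ᶜ := by
    ext q
    simp [mem_cnbhd_iff]
  rw [Fintype.existsUnique_iff_card_one, hcompl, card_compl, hC.card_cnbhd, hC.1, hdef]
  omega

end IsConfiguration

/-- A combinatorial `(v,b,r,k)`-configuration with deficiency one (that is,
`v = r·(k−1)+2`) has unique closed neighborhoods: every point has a unique
anti-podal point (a unique point not collinear with it), anti-podality is an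
involution without fixed points, and `CN p = CN q` implies `p = q`. -/
theorem deficiency_one_unique_closed_neighborhoods {P : Type*} [Fintype P]
    [DecidableEq P] (L : Finset (Finset P)) (v b r k : ℕ)
    (hC : IsConfiguration L v b r k) (hdef : v = r * (k - 1) + 2) :
    (∀ p : P, ∃! q : P, ¬Collin L p q) ∧
    (∃ antip : P → P, (∀ p : P, ¬Collin L p (antip p)) ∧
      (∀ p q : P, ¬Collin L p q → q = antip p) ∧
      (∀ p : P, antip (antip p) = p) ∧ (∀ p : P, antip p ≠ p)) ∧
    (∀ p q : P, cnbhd L p = cnbhd L q → p = q) := by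
  choose antip hantip hantip_unique using hC.existsUnique_not_collin hdef
  have hiff : ∀ p q, ¬Collin L p q ↔ q = antip p :=
    fun p q => ⟨hantip_unique p q, fun h => h ▸ hantip p⟩
  have hinv : Function.Involutive antip :=
    involutive_of_not_rel_iff_eq (fun _ _ => Collin.symm) hiff
  refine ⟨hC.existsUnique_not_collin hdef,
    ⟨antip, hantip, hantip_unique, hinv, fun p h => hantip p (h.symm ▸ Collin.refl p)⟩,
    fun p q hpq => hinv.injective ?_⟩
  exact (hiff q _).1 ((collin_iff_of_cnbhd_eq hpq).not.1 (hantip p))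
end

section
/- Let C be a connected combinatorial (v,b,r,k)-configuration with n-anonymous neighborhoods whose anonymity partition has all parts of cardinality exactly n, and suppose r = n and the number of parts equals k. Then C is a transversal design TD(k,n) with λ = 1 (the parts of the anonymity partition being the groups), and v = k·n and b = n². -/
open Finset

variable {P : Type*}

/-- The anonymity class of a point `p`: the set of points with the same
neighborhood as `p`. -/
def anonClass [Fintype P] [DecidableEq P] (L : Finset (Finset P)) (p : P) :
    Finset P :=
  Finset.univ.filter fun q => nbhd L q = nbhd L p

/-- An incidence structure is connected if any two points are joined by a chain
of incidences. -/
def ConfigConnected [DecidableEq P] (L : Finset (Finset P)) : Prop :=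
  ∀ p q : P, Relation.ReflTransGen (fun a b : P => ∃ l ∈ L, a ∈ l ∧ b ∈ l) p q

/-- A transversal design `TD(k,n)` with `λ = 1`: `k·n` points, blocks `B` of
exactly `k` points each, a set `G` of `k` groups of cardinality `n` partitioning
the points, every group and block meet in exactly one point, and every pair of
points from distinct groups is in exactly one block. -/
def IsTransversalDesign (P : Type*) [Fintype P] [DecidableEq P]
    (B G : Finset (Finset P)) (k n : ℕ) : Prop :=
  Fintype.card P = k * n ∧
  (∀ b ∈ B, b.card = k) ∧
  G.card = k ∧
  (∀ g ∈ G, g.card = n) ∧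
  (∀ p : P, ∃! g, g ∈ G ∧ p ∈ g) ∧
  (∀ g ∈ G, ∀ b ∈ B, (g ∩ b).card = 1) ∧
  (∀ p q : P, p ≠ q → (∀ g ∈ G, ¬(p ∈ g ∧ q ∈ g)) →
    (B.filter fun b => p ∈ b ∧ q ∈ b).card = 1)

/-! Points with the same neighborhood are never collinear (`q ∈ N p = N q` would put `q` in its
own neighborhood), so a line of `k` points meets `k` distinct anonymity classes, i.e. each of the
`k` classes exactly once. Given a point `p` outside a class `S`, the `r = n` lines through `p` meet
`S` in pairwise distinct points (two lines share at most `p`), so they exhaust the `n` points of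
`S`: `p` is collinear with every point outside its own class. Counting points class by class gives
`v = k n`, and counting flags gives `b k = v r = k n²`. -/

section AnonymityPartition

variable [Fintype P] [DecidableEq P] (L : Finset (Finset P))

def anonPartition : Finset (Finset P) :=
  univ.image (anonClass L)

variable {L}

theorem mem_anonClass {p q : P} : q ∈ anonClass L p ↔ nbhd L q = nbhd L p := by
  simp [anonClass]

theorem mem_anonClass_self (p : P) : p ∈ anonClass L p :=
  mem_anonClass.mpr rfl

theorem anonClass_eq_anonClass_iff {p q : P} :
    anonClass L p = anonClass L q ↔ nbhd L p = nbhd L q := by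
  refine ⟨fun h => mem_anonClass.mp (h ▸ mem_anonClass_self p), fun h => ?_⟩
  simp only [anonClass, h]

theorem anonClass_eq_of_mem {p q : P} (h : q ∈ anonClass L p) : anonClass L q = anonClass L p :=
  anonClass_eq_anonClass_iff.mpr (mem_anonClass.mp h)

theorem mem_anonPartition {g : Finset P} : g ∈ anonPartition L ↔ ∃ p, anonClass L p = g := by
  simp [anonPartition]

theorem anonClass_mem_anonPartition (p : P) : anonClass L p ∈ anonPartition L :=
  mem_anonPartition.mpr ⟨p, rfl⟩

theorem existsUnique_mem_anonPartition (p : P) : ∃! g, g ∈ anonPartition L ∧ p ∈ g := by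
  refine ⟨anonClass L p, ⟨anonClass_mem_anonPartition p, mem_anonClass_self p⟩, ?_⟩
  rintro g ⟨hg, hpg⟩
  obtain ⟨q, rfl⟩ := mem_anonPartition.mp hg
  exact (anonClass_eq_of_mem hpg).symm

theorem card_eq_card_anonPartition_mul {n : ℕ} (hclass : ∀ p : P, (anonClass L p).card = n) :
    Fintype.card P = (anonPartition L).card * n := by
  rw [← card_univ, card_eq_sum_card_image (anonClass L) univ, ← anonPartition,
    sum_const_nat fun g hg => ?_]
  obtain ⟨p, rfl⟩ := mem_anonPartition.mp hg
  rw [← hclass p]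
  congr 1
  ext q
  simp [anonClass_eq_anonClass_iff, mem_anonClass]

theorem eq_of_nbhd_eq_of_mem_line {p q : P} {l : Finset P} (h : nbhd L p = nbhd L q)
    (hl : l ∈ L) (hp : p ∈ l) (hq : q ∈ l) : p = q := by
  by_contra hne
  have hmem : q ∈ nbhd L p := by
    simp only [nbhd, mem_filter, mem_univ, true_and]
    exact ⟨Ne.symm hne, l, hl, hp, hq⟩
  rw [h] at hmem
  simp [nbhd] at hmem

theorem card_anonClass_inter_line_le_one (p : P) {l : Finset P} (hl : l ∈ L) :
    (anonClass L p ∩ l).card ≤ 1 := by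
  refine card_le_one.mpr fun x hx y hy => ?_
  rw [mem_inter, mem_anonClass] at hx hy
  exact eq_of_nbhd_eq_of_mem_line (hx.1.trans hy.1.symm) hl hx.2 hy.2

theorem anonClass_injOn_line {l : Finset P} (hl : l ∈ L) : Set.InjOn (anonClass L) l :=
  fun _ hx _ hy hxy => eq_of_nbhd_eq_of_mem_line (anonClass_eq_anonClass_iff.mp hxy) hl hx hy

theorem image_anonClass_line {l : Finset P} (hl : l ∈ L)
    (hcard : l.card = (anonPartition L).card) : l.image (anonClass L) = anonPartition L := by
  refine eq_of_subset_of_card_le (fun g hg => ?_) ?_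
  · obtain ⟨x, -, rfl⟩ := mem_image.mp hg
    exact anonClass_mem_anonPartition x
  · rw [card_image_of_injOn (anonClass_injOn_line hl), hcard]

theorem card_anonClass_inter_line {l : Finset P} (hl : l ∈ L)
    (hcard : l.card = (anonPartition L).card) (p : P) : (anonClass L p ∩ l).card = 1 := by
  refine le_antisymm (card_anonClass_inter_line_le_one p hl) (card_pos.mpr ?_)
  have : anonClass L p ∈ l.image (anonClass L) :=
    image_anonClass_line hl hcard ▸ anonClass_mem_anonPartition p
  obtain ⟨x, hxl, hx⟩ := mem_image.mp this
  exact ⟨x, mem_inter.mpr ⟨hx ▸ mem_anonClass_self x, hxl⟩⟩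

end AnonymityPartition

section Incidence

variable [DecidableEq P] {L : Finset (Finset P)}

theorem exists_line_through_of_card_lines_eq {S : Finset P} {p q : P} (hq : q ∈ S) (hp : p ∉ S)
    (hlin : ∀ x y : P, x ≠ y → (L.filter fun l => x ∈ l ∧ y ∈ l).card ≤ 1)
    (hmeet : ∀ l ∈ L, (S ∩ l).card = 1) (hcard : (L.filter fun l => p ∈ l).card = S.card) :
    ∃ l ∈ L, p ∈ l ∧ q ∈ l := by
  set Lp := L.filter fun l => p ∈ l
  have hdisj : (Lp : Set (Finset P)).PairwiseDisjoint (S ∩ ·) := by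
    intro l₁ h₁ l₂ h₂ hne
    rw [Function.onFun, disjoint_left]
    intro x hx₁ hx₂
    rw [mem_coe, mem_filter] at h₁ h₂
    rw [mem_inter] at hx₁ hx₂
    have htwo : 1 < (L.filter fun l => p ∈ l ∧ x ∈ l).card :=
      one_lt_card.mpr ⟨l₁, by simp [h₁.1, h₁.2, hx₁.2], l₂, by simp [h₂.1, h₂.2, hx₂.2], hne⟩
    exact absurd (hlin p x fun h => hp (h ▸ hx₁.1)) (not_le.mpr htwo)
  have hcover : Lp.biUnion (S ∩ ·) = S := by
    refine eq_of_subset_of_card_le (biUnion_subset.mpr fun _ _ => inter_subset_left) ?_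
    rw [card_biUnion hdisj, sum_const_nat fun l hl => hmeet l (mem_filter.mp hl).1, hcard, mul_one]
  obtain ⟨l, hl, hql⟩ := mem_biUnion.mp (hcover ▸ hq)
  exact ⟨l, (mem_filter.mp hl).1, (mem_filter.mp hl).2, (mem_inter.mp hql).2⟩

theorem card_mul_eq_card_mul_of_uniform [Fintype P] {k r : ℕ} (hk : ∀ l ∈ L, l.card = k)
    (hr : ∀ p : P, (L.filter fun l => p ∈ l).card = r) : L.card * k = Fintype.card P * r := by
  rw [← card_univ]
  refine card_mul_eq_card_mul (fun l p => p ∈ l) (fun l hl => ?_) fun p _ => hr p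
  rw [bipartiteAbove, filter_mem_eq_inter, univ_inter, hk l hl]

end Incidence

theorem anonymous_neighborhoods_transversal_design_general {P : Type*} [Fintype P]
    [DecidableEq P] (L : Finset (Finset P)) (v b r k n : ℕ)
    (hC : IsConfiguration L v b r k)
    (hclass : ∀ p : P, (anonClass L p).card = n) (hr : r = n)
    (hm : (Finset.univ.image fun p : P => anonClass L p).card = k) :
    IsTransversalDesign P L (Finset.univ.image fun p : P => anonClass L p) k n ∧
    v = k * n ∧ b = n ^ 2 := by
  obtain ⟨rfl, rfl, hk, -, hlines, hpoints, hlin⟩ := hC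
  subst hr
  change (anonPartition L).card = k at hm
  have hmeet : ∀ l ∈ L, ∀ p : P, (anonClass L p ∩ l).card = 1 := fun l hl =>
    card_anonClass_inter_line hl (by rw [hlines l hl, hm])
  have hcardP : Fintype.card P = k * r := hm ▸ card_eq_card_anonPartition_mul hclass
  have hb : L.card * k = r ^ 2 * k := by
    rw [card_mul_eq_card_mul_of_uniform hlines hpoints, hcardP]; ring
  refine ⟨⟨hcardP, hlines, hm, ?_, existsUnique_mem_anonPartition, ?_, ?_⟩, hcardP,
    Nat.eq_of_mul_eq_mul_right (by omega) hb⟩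
  · intro g hg
    obtain ⟨p, rfl⟩ := mem_anonPartition.mp hg
    exact hclass p
  · intro g hg l hl
    obtain ⟨p, rfl⟩ := mem_anonPartition.mp hg
    exact hmeet l hl p
  · intro p q hne hsep
    have hpq : p ∉ anonClass L q := fun h =>
      hsep _ (anonClass_mem_anonPartition q) ⟨h, mem_anonClass_self q⟩
    obtain ⟨l, hl, hpl, hql⟩ := exists_line_through_of_card_lines_eq (mem_anonClass_self q) hpq
      hlin (fun l hl => hmeet l hl q) (by rw [hpoints, hclass])
    exact le_antisymm (hlin p q hne) (card_pos.mpr ⟨l, mem_filter.mpr ⟨hl, hpl, hql⟩⟩)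

/-- A connected combinatorial `(v,b,r,k)`-configuration with `n`-anonymous
neighborhoods, whose anonymity classes all have cardinality exactly `n`, with
`r = n` and exactly `k` anonymity classes, is a transversal design `TD(k,n)`
with `λ = 1` whose groups are the anonymity classes; moreover `v = k·n` and
`b = n²`. -/
theorem anonymous_neighborhoods_transversal_design {P : Type*} [Fintype P]
    [DecidableEq P] [Nonempty P] (L : Finset (Finset P)) (v b r k n : ℕ)
    (hconn : ConfigConnected L) (hC : IsConfiguration L v b r k)
    (hclass : ∀ p : P, (anonClass L p).card = n) (hr : r = n)
    (hm : (Finset.univ.image fun p : P => anonClass L p).card = k) :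
    IsTransversalDesign P L (Finset.univ.image fun p : P => anonClass L p) k n ∧
    v = k * n ∧ b = n ^ 2 :=
  anonymous_neighborhoods_transversal_design_general L v b r k n hC hclass hr hm
end
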